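/- Let α, τ, ξ be real numbers with 0 < α < 1/2, ξ > 0 and 0 < τ < α. Then arg T_s ≠ arg T_B, where arg denotes the principal argument with values in (−π, π]. -/

import Mathlib

/-- The term `T_s` of the generalised Fredholm symbol on the segment `Γ₁`. -/
noncomputable def Ts (α τ ξ : ℝ) : ℂ :=
  Complex.sin ((Real.pi : ℂ) * (1 - (τ : ℂ) + (α : ℂ) - Complex.I * (ξ : ℂ))) /
    Complex.sin ((Real.pi : ℂ) * (1 - (τ : ℂ) + 2 * (α : ℂ) - Complex.I * (ξ : ℂ)))

/-- The term `T_B` of the generalised Fredholm symbol on the segment `Γ₁`. -/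
noncomputable def TB (α τ ξ : ℝ) : ℂ :=
  Complex.sin ((Real.pi : ℂ) * (α : ℂ)) / (Real.pi : ℂ) *
      Complex.Gamma ((τ : ℂ) - 2 * (α : ℂ) + 1 + Complex.I * (ξ : ℂ)) *
      Complex.Gamma (2 * (α : ℂ)) /
    Complex.Gamma ((τ : ℂ) + 1 + Complex.I * (ξ : ℂ))

/-!
By the reflection formula, `T_s / T_B = ∏ Γ(sᵢ) / ∏ Γ(tᵢ)` for two quadruples of points in the
right half-plane with `∑ sᵢ = ∑ tᵢ`, so Gauss's product formula writes it as the infinite product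
`∏ₖ ∏ᵢ (tᵢ + k) / (sᵢ + k)`. The phase of the `k`-th factor is `g (1 - α + τ + k) - g (α - τ + k)`,
where `g x = arctan (ξ / x) - arctan (ξ / (x + α))` is strictly decreasing, so every phase is
negative, while the partial sums of the phases stay above `-π / 2` because `g` is dominated by the
telescoping `arctan (ξ / x) - arctan (ξ / (x + 1))`. Hence the partial products, and their nonzero
limit, lie in the sector between the angle `-π / 2` and the phase `θ₀ < 0` of the first factor:
the limit has negative imaginary part, so `T_s / T_B` is not a positive real.
-/

open Complex Filter Topology Finset
open scoped Nat Real

namespace Complex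

lemma arg_eq_arctan_of_re_pos {z : ℂ} (hz : 0 < z.re) : arg z = Real.arctan (z.im / z.re) := by
  have h := abs_lt.mp (abs_arg_lt_pi_div_two_iff.mpr (Or.inl hz))
  rw [← tan_arg, Real.arctan_tan h.1 h.2]

lemma prod_cpow_eq_cpow_sum {ι : Type*} (S : Finset ι) {x : ℂ} (hx : x ≠ 0) (s : ι → ℂ) :
    ∏ i ∈ S, x ^ s i = x ^ ∑ i ∈ S, s i := by
  simp only [cpow_def_of_ne_zero hx, mul_sum, exp_sum]

lemma prod_eq_norm_mul_exp_sum {ι : Type*} {S : Finset ι} {q : ι → ℂ} {θ : ι → ℝ}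
    (h : ∀ k ∈ S, q k = ‖q k‖ * exp (θ k * I)) :
    ∏ k ∈ S, q k = ‖∏ k ∈ S, q k‖ * exp ((∑ k ∈ S, θ k : ℝ) * I) := by
  conv_lhs => rw [prod_congr rfl h]
  rw [prod_mul_distrib, norm_prod, ofReal_prod, ofReal_sum, sum_mul, exp_sum]

lemma div_eq_norm_mul_exp_sub {z w : ℂ} {θ η : ℝ} (hz : z = ‖z‖ * exp (θ * I))
    (hw : w = ‖w‖ * exp (η * I)) : z / w = ‖z / w‖ * exp ((θ - η : ℝ) * I) := by
  conv_lhs => rw [hz, hw]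
  rw [norm_div, ofReal_div, ofReal_sub, sub_mul, exp_sub, mul_div_mul_comm]

lemma div_eq_norm_mul_exp_arg_sub (z w : ℂ) : z / w = ‖z / w‖ * exp ((arg z - arg w : ℝ) * I) :=
  div_eq_norm_mul_exp_sub (norm_mul_exp_arg_mul_I z).symm (norm_mul_exp_arg_mul_I w).symm

lemma prod_div_prod_eq_norm_mul_exp {ι : Type*} (S : Finset ι) (z w : ι → ℂ) :
    (∏ i ∈ S, z i) / ∏ i ∈ S, w i
      = ‖(∏ i ∈ S, z i) / ∏ i ∈ S, w i‖
        * exp ((∑ i ∈ S, arg (z i) - ∑ i ∈ S, arg (w i) : ℝ) * I) :=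
  div_eq_norm_mul_exp_sub (prod_eq_norm_mul_exp_sum fun _ _ ↦ (norm_mul_exp_arg_mul_I _).symm)
    (prod_eq_norm_mul_exp_sum fun _ _ ↦ (norm_mul_exp_arg_mul_I _).symm)

lemma im_le_norm_mul_sin {z : ℂ} {θ θ₀ : ℝ} (hz : z = ‖z‖ * exp (θ * I))
    (hθ : -(π / 2) ≤ θ) (hθθ₀ : θ ≤ θ₀) (hθ₀ : θ₀ ≤ π / 2) :
    z.im ≤ ‖z‖ * Real.sin θ₀ := by
  have him := congrArg im hz
  rw [im_ofReal_mul, exp_ofReal_mul_I_im] at him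
  rw [him]
  exact mul_le_mul_of_nonneg_left (Real.sin_le_sin_of_le_of_le_pi_div_two hθ hθ₀ hθθ₀)
    (norm_nonneg z)

lemma im_neg_of_tendsto_of_phase_le {α : Type*} {l : Filter α} [l.NeBot] {u : α → ℂ}
    {Θ : α → ℝ} {L : ℂ} {θ₀ : ℝ} (hu : Tendsto u l (𝓝 L)) (hL : L ≠ 0)
    (hpolar : ∀ᶠ n in l, u n = ‖u n‖ * exp (Θ n * I)) (hlower : ∀ᶠ n in l, -(π / 2) ≤ Θ n)
    (hupper : ∀ᶠ n in l, Θ n ≤ θ₀) (hθ₀ : θ₀ < 0) : L.im < 0 := by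
  obtain ⟨n, hn_lower, hn_upper⟩ := (hlower.and hupper).exists
  have hL_im : L.im ≤ ‖L‖ * Real.sin θ₀ :=
    le_of_tendsto_of_tendsto ((continuous_im.tendsto L).comp hu)
      (((continuous_norm.tendsto L).comp hu).mul_const _)
      ((hpolar.and (hlower.and hupper)).mono fun n ⟨hz, hθ, hθθ₀⟩ ↦
        im_le_norm_mul_sin hz hθ hθθ₀ (by linarith [Real.pi_pos]))
  have hsin : Real.sin θ₀ < 0 := Real.sin_neg_of_neg_of_neg_pi_lt hθ₀ (by linarith [Real.pi_pos])
  linarith [mul_neg_of_pos_of_neg (norm_pos_iff.mpr hL) hsin]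

lemma sin_pi_mul_eq_pi_div_Gamma_mul_Gamma_one_sub (z : ℂ) :
    sin (π * z) = π / (Gamma z * Gamma (1 - z)) := by
  rw [Gamma_mul_Gamma_one_sub, div_div_cancel₀ (ofReal_ne_zero.mpr Real.pi_ne_zero)]

variable {ι : Type*} {S : Finset ι} {s t : ι → ℂ}

lemma prod_GammaSeq_div_prod_GammaSeq (hst : ∑ i ∈ S, s i = ∑ i ∈ S, t i) {n : ℕ} (hn : n ≠ 0) :
    (∏ i ∈ S, GammaSeq (s i) n) / ∏ i ∈ S, GammaSeq (t i) n
      = ∏ k ∈ range (n + 1), (∏ i ∈ S, (t i + k)) / ∏ i ∈ S, (s i + k) := by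
  have hn' : (n : ℂ) ≠ 0 := Nat.cast_ne_zero.mpr hn
  simp only [GammaSeq, prod_div_distrib, prod_mul_distrib, prod_cpow_eq_cpow_sum S hn', hst]
  rw [div_div_div_cancel_left' _ _ (by simp [hn, Nat.factorial_ne_zero]), prod_comm (s := S),
    prod_comm (s := S)]

lemma tendsto_prod_range_prod_add_div_prod_add (hst : ∑ i ∈ S, s i = ∑ i ∈ S, t i)
    (ht : ∏ i ∈ S, Gamma (t i) ≠ 0) :
    Tendsto (fun N ↦ ∏ k ∈ range N, (∏ i ∈ S, (t i + k)) / ∏ i ∈ S, (s i + k)) atTop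
      (𝓝 ((∏ i ∈ S, Gamma (s i)) / ∏ i ∈ S, Gamma (t i))) := by
  rw [← tendsto_add_atTop_iff_nat 1]
  refine ((tendsto_finsetProd S fun i _ ↦ GammaSeq_tendsto_Gamma (s i)).div
    (tendsto_finsetProd S fun i _ ↦ GammaSeq_tendsto_Gamma (t i)) ht).congr' ?_
  filter_upwards [eventually_ne_atTop 0] with n hn using prod_GammaSeq_div_prod_GammaSeq hst hn

end Complex

namespace Real

noncomputable def arctanGap (ξ c x : ℝ) : ℝ := arctan (ξ / x) - arctan (ξ / (x + c))

variable {ξ c x : ℝ}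

lemma arctanGap_eq (hx : 0 < x) (hxc : 0 < x + c) :
    arctanGap ξ c x = arctan (ξ * c / (x * (x + c) + ξ ^ 2)) := by
  have hprod : 0 ≤ ξ / x * (ξ / (x + c)) := by
    rw [div_mul_div_comm, ← sq]
    positivity
  have hden : x * (x + c) + ξ ^ 2 ≠ 0 := by positivity
  rw [arctanGap, sub_eq_add_neg, ← arctan_neg, arctan_add (by nlinarith)]
  congr 1
  rw [div_eq_div_iff (by nlinarith) hden]
  field_simp
  ring

lemma arctanGap_strictAntiOn (hξ : 0 < ξ) (hc : 0 < c) :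
    StrictAntiOn (arctanGap ξ c) (Set.Ioi 0) := by
  intro x hx y hy hxy
  rw [arctanGap_eq hy (by linarith [hy.out]), arctanGap_eq hx (by linarith [hx.out])]
  apply arctan_strictMono
  apply div_lt_div_of_pos_left (by positivity) (by nlinarith [hx.out]) (by nlinarith [hx.out])

lemma arctanGap_nonneg (hξ : 0 ≤ ξ) (hc : 0 ≤ c) (hx : 0 < x) : 0 ≤ arctanGap ξ c x :=
  sub_nonneg.mpr <| arctan_strictMono.monotone <|
    div_le_div_of_nonneg_left hξ hx (le_add_of_nonneg_right hc)

lemma arctanGap_le_arctanGap_of_le (hξ : 0 ≤ ξ) (hc : 0 ≤ c) {d : ℝ} (hcd : c ≤ d)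
    (hx : 0 < x) :
    arctanGap ξ c x ≤ arctanGap ξ d x :=
  sub_le_sub_left (arctan_strictMono.monotone <|
    div_le_div_of_nonneg_left hξ (by linarith) (by linarith)) _

lemma sum_range_arctanGap_one (ξ a : ℝ) (N : ℕ) :
    ∑ k ∈ Finset.range N, arctanGap ξ 1 (a + k) = arctan (ξ / a) - arctan (ξ / (a + N)) := by
  simpa only [arctanGap, Nat.cast_add, Nat.cast_one, Nat.cast_zero, add_zero, ← add_assoc] using
    Finset.sum_range_sub' (fun k : ℕ ↦ arctan (ξ / (a + k))) N

lemma sum_range_arctanGap_lt_pi_div_two (hξ : 0 ≤ ξ) (hc : 0 ≤ c) (hc₁ : c ≤ 1) {a : ℝ}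
    (ha : 0 < a) (N : ℕ) : ∑ k ∈ Finset.range N, arctanGap ξ c (a + k) < π / 2 := by
  have hgap : ∀ k : ℕ, arctanGap ξ c (a + k) ≤ arctanGap ξ 1 (a + k) := fun k ↦
    arctanGap_le_arctanGap_of_le hξ hc hc₁ (by positivity)
  calc ∑ k ∈ Finset.range N, arctanGap ξ c (a + k)
      ≤ ∑ k ∈ Finset.range N, arctanGap ξ 1 (a + k) := Finset.sum_le_sum fun k _ ↦ hgap k
    _ = arctan (ξ / a) - arctan (ξ / (a + N)) := sum_range_arctanGap_one ξ a N
    _ ≤ arctan (ξ / a) := sub_le_self _ <| arctan_nonneg.mpr (by positivity)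
    _ < π / 2 := arctan_lt_pi_div_two _

lemma neg_pi_div_two_lt_sum_range_arctanGap_sub {ξ c a b : ℝ} (hξ : 0 ≤ ξ) (hc : 0 ≤ c)
    (hc₁ : c ≤ 1) (ha : 0 < a) (hab : a ≤ b) (N : ℕ) :
    -(π / 2) < ∑ k ∈ Finset.range N, (arctanGap ξ c (b + k) - arctanGap ξ c (a + k)) := by
  have hb : 0 ≤ ∑ k ∈ Finset.range N, arctanGap ξ c (b + k) :=
    Finset.sum_nonneg fun k _ ↦ arctanGap_nonneg hξ hc (by linarith [k.cast_nonneg (α := ℝ)])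
  rw [Finset.sum_sub_distrib]
  linarith [sum_range_arctanGap_lt_pi_div_two hξ hc hc₁ ha N]

end Real

section symbol

variable {α τ ξ : ℝ}

def symbolGammaNum (α τ ξ : ℝ) : Fin 4 → ℂ := ![⟨2 * α - τ, -ξ⟩, ⟨1 + τ, ξ⟩, α, 1 - α]

def symbolGammaDen (α τ ξ : ℝ) : Fin 4 → ℂ := ![⟨α - τ, -ξ⟩, ⟨1 - α + τ, ξ⟩, 2 * α, 1]

lemma sum_symbolGammaNum_eq_sum_symbolGammaDen :
    ∑ i, symbolGammaNum α τ ξ i = ∑ i, symbolGammaDen α τ ξ i := by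
  apply Complex.ext
  · simp [Fin.sum_univ_four, symbolGammaNum, symbolGammaDen]
    ring
  · simp [Fin.sum_univ_four, symbolGammaNum, symbolGammaDen]

lemma re_symbolGammaNum_pos (hα' : α < 1 / 2) (hτ : 0 < τ) (hτ' : τ < α)
    (i : Fin 4) : 0 < (symbolGammaNum α τ ξ i).re := by
  fin_cases i <;> simp [symbolGammaNum] <;> linarith

lemma re_symbolGammaDen_pos (hα' : α < 1 / 2) (hτ : 0 < τ) (hτ' : τ < α)
    (i : Fin 4) : 0 < (symbolGammaDen α τ ξ i).re := by
  fin_cases i <;> simp [symbolGammaDen] <;> linarith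

lemma Ts_div_TB_eq (hα' : α < 1 / 2) (hτ : 0 < τ) :
    Ts α τ ξ / TB α τ ξ
      = (∏ i, Gamma (symbolGammaNum α τ ξ i)) / ∏ i, Gamma (symbolGammaDen α τ ξ i) := by
  simp only [symbolGammaNum, symbolGammaDen, Fin.prod_univ_four, Matrix.cons_val_zero,
    Matrix.cons_val_one, Matrix.cons_val, Gamma_one, mul_one]
  set u₁ : ℂ := ⟨α - τ, -ξ⟩
  set u₂ : ℂ := ⟨2 * α - τ, -ξ⟩
  have hTs : Ts α τ ξ = Gamma u₂ * Gamma (1 - u₂) / (Gamma u₁ * Gamma (1 - u₁)) := by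
    have h₁ : (π : ℂ) * (1 - τ + α - I * ξ) = π * u₁ + π := by
      apply Complex.ext <;> simp <;> ring
    have h₂ : (π : ℂ) * (1 - τ + 2 * α - I * ξ) = π * u₂ + π := by
      apply Complex.ext <;> simp <;> ring
    rw [Ts, h₁, h₂, sin_add_pi, sin_add_pi, neg_div_neg_eq,
      sin_pi_mul_eq_pi_div_Gamma_mul_Gamma_one_sub, sin_pi_mul_eq_pi_div_Gamma_mul_Gamma_one_sub,
      div_div_div_cancel_left' _ _ (ofReal_ne_zero.mpr Real.pi_ne_zero)]
  have hTB : TB α τ ξ = Gamma (1 - u₂) * Gamma (2 * α)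
      / (Gamma α * Gamma (1 - α) * Gamma ⟨1 + τ, ξ⟩) := by
    have h₁ : (τ : ℂ) - 2 * α + 1 + I * ξ = 1 - u₂ := by
      apply Complex.ext <;> simp <;> ring
    have h₂ : (τ : ℂ) + 1 + I * ξ = ⟨1 + τ, ξ⟩ := by
      apply Complex.ext <;> simp [add_comm]
    rw [TB, h₁, h₂, sin_pi_mul_eq_pi_div_Gamma_mul_Gamma_one_sub]
    field_simp
  have hv : 1 - u₁ = ⟨1 - α + τ, ξ⟩ := by
    apply Complex.ext <;> simp <;> ring
  have hΓ : Gamma (1 - u₂) ≠ 0 := Gamma_ne_zero_of_re_pos (by simp [u₂]; linarith)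
  rw [hTs, hTB, hv, div_div_div_eq]
  rw [← mul_div_mul_right (Gamma u₂ * Gamma ⟨1 + τ, ξ⟩ * Gamma α * Gamma (1 - α))
    (Gamma u₁ * Gamma ⟨1 - α + τ, ξ⟩ * Gamma (2 * α)) hΓ]
  ring

lemma sum_arg_symbolGammaDen_sub_sum_arg_symbolGammaNum (hα' : α < 1 / 2)
    (hτ : 0 < τ) (hτ' : τ < α) (k : ℕ) :
    ∑ i, arg (symbolGammaDen α τ ξ i + k) - ∑ i, arg (symbolGammaNum α τ ξ i + k)
      = Real.arctanGap ξ α (1 - α + τ + k) - Real.arctanGap ξ α (α - τ + k) := by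
  have harg : ∀ z : ℂ, 0 < z.re → arg (z + k) = Real.arctan (z.im / (z.re + k)) := fun z hz ↦ by
    rw [arg_eq_arctan_of_re_pos (by simp; positivity)]
    simp
  simp only [harg _ (re_symbolGammaNum_pos hα' hτ hτ' _),
    harg _ (re_symbolGammaDen_pos hα' hτ hτ' _)]
  simp [Fin.sum_univ_four, symbolGammaNum, symbolGammaDen, Real.arctanGap, neg_div,
    Real.arctan_neg]
  rw [show 1 - α + τ + k + α = 1 + τ + k by ring, show α - τ + k + α = 2 * α - τ + k by ring]
  ring

lemma im_prod_Gamma_symbolGammaNum_div_prod_Gamma_symbolGammaDen_neg (hα : 0 < α)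
    (hα' : α < 1 / 2) (hξ : 0 < ξ) (hτ : 0 < τ) (hτ' : τ < α) :
    ((∏ i, Gamma (symbolGammaNum α τ ξ i)) / ∏ i, Gamma (symbolGammaDen α τ ξ i)).im < 0 := by
  set L := (∏ i, Gamma (symbolGammaNum α τ ξ i)) / ∏ i, Gamma (symbolGammaDen α τ ξ i)
  set q : ℕ → ℂ := fun k ↦
    (∏ i, (symbolGammaDen α τ ξ i + k)) / ∏ i, (symbolGammaNum α τ ξ i + k)
  set θ : ℕ → ℝ := fun k ↦
    Real.arctanGap ξ α (1 - α + τ + k) - Real.arctanGap ξ α (α - τ + k)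
  have hθ_neg (k : ℕ) : θ k < 0 := by
    have hk := k.cast_nonneg (α := ℝ)
    refine sub_neg.mpr (Real.arctanGap_strictAntiOn hξ hα (Set.mem_Ioi.mpr ?_)
      (Set.mem_Ioi.mpr ?_) ?_) <;> linarith
  have hθ_sum (N : ℕ) : -(π / 2) < ∑ k ∈ range N, θ k :=
    Real.neg_pi_div_two_lt_sum_range_arctanGap_sub hξ.le hα.le (by linarith) (by linarith)
      (by linarith) N
  have hθ_sum_le (N : ℕ) (hN : 1 ≤ N) : ∑ k ∈ range N, θ k ≤ θ 0 := by
    obtain ⟨M, rfl⟩ := Nat.exists_eq_add_of_le' hN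
    rw [sum_range_succ']
    linarith [sum_nonpos fun k (_ : k ∈ range M) ↦ (hθ_neg (k + 1)).le]
  have hpolar (N : ℕ) : ∏ k ∈ range N, q k
      = ‖∏ k ∈ range N, q k‖ * exp ((∑ k ∈ range N, θ k : ℝ) * I) :=
    prod_eq_norm_mul_exp_sum fun k _ ↦ by
      simp only [q, θ, ← sum_arg_symbolGammaDen_sub_sum_arg_symbolGammaNum hα' hτ hτ' k]
      exact prod_div_prod_eq_norm_mul_exp _ _ _
  have hlim : Tendsto (fun N ↦ ∏ k ∈ range N, q k) atTop (𝓝 L) :=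
    tendsto_prod_range_prod_add_div_prod_add sum_symbolGammaNum_eq_sum_symbolGammaDen <|
      prod_ne_zero_iff.mpr fun i _ ↦ Gamma_ne_zero_of_re_pos (re_symbolGammaDen_pos hα' hτ hτ' i)
  have hL : L ≠ 0 := div_ne_zero
    (prod_ne_zero_iff.mpr fun i _ ↦ Gamma_ne_zero_of_re_pos (re_symbolGammaNum_pos hα' hτ hτ' i))
    (prod_ne_zero_iff.mpr fun i _ ↦ Gamma_ne_zero_of_re_pos (re_symbolGammaDen_pos hα' hτ hτ' i))
  exact im_neg_of_tendsto_of_phase_le hlim hL (.of_forall hpolar)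
    (.of_forall fun N ↦ (hθ_sum N).le) (eventually_atTop.mpr ⟨1, hθ_sum_le⟩) (hθ_neg 0)

end symbol

theorem arg_Ts_ne_arg_TB_of_tau_lt_alpha
    (α τ ξ : ℝ) (hα : 0 < α) (hα' : α < 1 / 2) (hξ : 0 < ξ) (hτ : 0 < τ) (hτ' : τ < α) :
    Complex.arg (Ts α τ ξ) ≠ Complex.arg (TB α τ ξ) := by
  intro h
  have him := im_prod_Gamma_symbolGammaNum_div_prod_Gamma_symbolGammaDen_neg hα hα' hξ hτ hτ'
  rw [← Ts_div_TB_eq hα' hτ, div_eq_norm_mul_exp_arg_sub, h, sub_self] at him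
  simp at him
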